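/- Let W ∈ 𝒲 and let s : ℕ → ℕ be a non-decreasing function with s(1) = 1, s(N) → ∞, and s(N) − s(N−1) ∈ {0,1} for all N ≥ 2. Define ŝ(k) = max{ n ∈ ℕ : s(n) ≤ k }. Suppose lim_{N→∞} Δ(W∘ŝ)(N)/(W∘ŝ)(N) = 0. Then the supremum, over all functions f : ℕ → ℂ with ‖f‖∞ ≤ 1, of | E^W_{n≤N} f(s(n)) − E^{W∘ŝ}_{k≤s(N)} f(k) | tends to 0 as N → ∞. -/

import Mathlib

open Filter Finset

/-- Discrete derivative: `ΔW(N) = W(N) - W(N-1)` for `N ≥ 2`, and `ΔW(1) = W(1)`. -/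
noncomputable def dd (W : ℕ → ℝ) (N : ℕ) : ℝ := if 2 ≤ N then W N - W (N - 1) else W 1

/-- Weighted average `E^W_{n ≤ N} f(n) = (1/W(N)) ∑_{n=1}^N ΔW(n) f(n)`. -/
noncomputable def wAvg (W : ℕ → ℝ) (f : ℕ → ℂ) (N : ℕ) : ℂ :=
  (1 / (W N : ℂ)) * ∑ n ∈ Finset.Icc 1 N, (dd W n : ℂ) * f n

/-- Cesàro average `E_{n ≤ N} f(n) = (1/N) ∑_{n=1}^N f(n)`. -/
noncomputable def cesaro (f : ℕ → ℂ) (N : ℕ) : ℂ :=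
  (1 / (N : ℂ)) * ∑ n ∈ Finset.Icc 1 N, f n

/-- Parity-neutral binomial mean. -/
noncomputable def e2bin (f : ℕ → ℂ) (N : ℕ) : ℂ :=
  (1 / 2 ^ (N + 1) : ℂ) * ∑ n ∈ Finset.Icc 1 (2 * N), (Nat.choose N (n / 2) : ℂ) * f n

/-- Binomial mean. -/
noncomputable def ebin (f : ℕ → ℂ) (N : ℕ) : ℂ :=
  (1 / 2 ^ N : ℂ) * ∑ n ∈ Finset.Icc 1 N, (Nat.choose N n : ℂ) * f n

/-- The class 𝒲: eventually non-decreasing nonnegative functions tending to ∞. -/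
def memW (W : ℕ → ℝ) : Prop :=
  (∀ n, 0 ≤ W n) ∧ (∃ N₀ : ℕ, ∀ m n : ℕ, N₀ ≤ m → m ≤ n → W m ≤ W n) ∧
    Tendsto W atTop atTop

/-- The class 𝒲*: members of 𝒲 for which `N·Δ²W(N)/ΔW(N)` converges in `ℝ ∪ {±∞}`. -/
def memWstar (W : ℕ → ℝ) : Prop :=
  memW W ∧ ∃ l : EReal,
    Tendsto (fun N : ℕ => (((N : ℝ) * dd (dd W) N / dd W N : ℝ) : EReal)) atTop (nhds l)

/-- The class ℒ: members of 𝒲 (with values in ℕ) whose discrete derivative is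
eventually in {0,1}. -/
def memL (L : ℕ → ℕ) : Prop :=
  memW (fun n => (L n : ℝ)) ∧
    ∃ N₀ : ℕ, ∀ n : ℕ, N₀ ≤ n → L n = L (n - 1) ∨ L n = L (n - 1) + 1

/-- Gaussian probability density with mean μ and standard deviation σ. -/
noncomputable def gauss (x μ σ : ℝ) : ℝ :=
  (1 / (σ * Real.sqrt (2 * Real.pi))) * Real.exp (-(x - μ) ^ 2 / (2 * σ ^ 2))

/-- The Gaussian condition \eqref{gaussian_condition}. -/
def gaussCond (ϑ : ℕ → ℕ) (L : ℕ → ℕ) : Prop :=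
  Tendsto (fun N : ℕ => ∑' k : ℕ,
      |(((Finset.Icc 1 N).filter (fun n => ϑ n = k + 1)).card : ℝ) / N -
        gauss (k + 1 : ℝ) (L N) (Real.sqrt (L N))|) atTop (nhds 0)

/-- Ω(n): number of prime factors with multiplicity. -/
def bigOmega (n : ℕ) : ℕ := n.primeFactorsList.length

/-- ω(n): number of distinct prime factors. -/
def smallOmega (n : ℕ) : ℕ := n.primeFactors.card

/-- Uniform distribution mod 1. -/
def udMod1 (x : ℕ → ℝ) : Prop :=
  ∀ a b : ℝ, 0 ≤ a → a < b → b ≤ 1 →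
    Tendsto (fun N : ℕ =>
        (((Finset.Icc 1 N).filter
            (fun n => a ≤ Int.fract (x n) ∧ Int.fract (x n) < b)).card : ℝ) / N)
      atTop (nhds (b - a))

/-- `ŝ(k) = max{n : s(n) ≤ k}`, realized as a supremum in `ℕ`. -/
noncomputable def hatS (s : ℕ → ℕ) (k : ℕ) : ℕ := sSup {n : ℕ | s n ≤ k}

/-!
Since `s` moves by steps `0` or `1`, the `n` with `s n = k` form a block of consecutive
integers ending at `ŝ k`, over which `ΔW` telescopes to `Δ(W ∘ ŝ) k`. So the two weighted sums
agree except for the unfinished block of `s N`, and the two averages differ by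
`((W ∘ ŝ)(s N) - W N) / W N` times a bounded factor. As `W N ≥ (W ∘ ŝ)(s N - 1)`, this ratio
is at most `Δ(W ∘ ŝ)(s N) / (W ∘ ŝ)(s N - 1)`, which tends to `0` by hypothesis.
-/

lemma dd_of_two_le (g : ℕ → ℝ) {N : ℕ} (hN : 2 ≤ N) : dd g N = g N - g (N - 1) :=
  if_pos hN

lemma sum_Icc_dd (g : ℕ → ℝ) {M : ℕ} (hM : 1 ≤ M) : ∑ k ∈ Icc 1 M, dd g k = g M := by
  induction M, hM using Nat.le_induction with
  | base => simp [dd]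
  | succ M hM ih =>
    rw [sum_Icc_succ_top (by omega), ih, dd_of_two_le g (by omega), Nat.add_sub_cancel]
    ring

lemma sum_abs_dd_le {g : ℕ → ℝ} {K M : ℕ} (hK : 1 ≤ K) (hKM : K ≤ M)
    (hg : MonotoneOn g (Set.Ici K)) :
    ∑ k ∈ Icc 1 M, |dd g k| ≤ g M + ∑ k ∈ Icc 1 K, (|dd g k| - dd g k) := by
  have hdefect :
      ∑ k ∈ Icc 1 K, (|dd g k| - dd g k) = ∑ k ∈ Icc 1 M, (|dd g k| - dd g k) := by
    refine sum_subset (Icc_subset_Icc_right hKM) fun k hkM hkK => ?_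
    have hk : K < k := by simp only [mem_Icc] at hkM hkK; omega
    have hdd : 0 ≤ dd g k := by
      rw [dd_of_two_le g (by omega), sub_nonneg]
      exact hg (Set.mem_Ici.2 (by omega)) (Set.mem_Ici.2 hk.le) (by omega)
    rw [abs_of_nonneg hdd, sub_self]
  rw [hdefect, ← sum_Icc_dd g (hK.trans hKM), ← sum_add_distrib]
  exact sum_le_sum fun k _ => by linarith

lemma norm_wAvg_le {g : ℕ → ℝ} {K M : ℕ} (hK : 1 ≤ K) (hKM : K ≤ M)
    (hg : MonotoneOn g (Set.Ici K)) (hM : 0 < g M) {f : ℕ → ℂ} (hf : ∀ n, ‖f n‖ ≤ 1) :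
    ‖wAvg g f M‖ ≤ 1 + (∑ k ∈ Icc 1 K, (|dd g k| - dd g k)) / g M := by
  have hsum : ‖∑ n ∈ Icc 1 M, (dd g n : ℂ) * f n‖ ≤ ∑ n ∈ Icc 1 M, |dd g n| := by
    refine (norm_sum_le _ _).trans (sum_le_sum fun n _ => ?_)
    rw [norm_mul, Complex.norm_real, Real.norm_eq_abs]
    exact mul_le_of_le_one_right (abs_nonneg _) (hf n)
  rw [wAvg, norm_mul, one_div, norm_inv, Complex.norm_real, Real.norm_of_nonneg hM.le,
    one_add_div hM.ne', inv_mul_le_iff₀ hM, mul_div_cancel₀ _ hM.ne']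
  exact hsum.trans (sum_abs_dd_le hK hKM hg)

lemma tendsto_dd_div_pred {V : ℕ → ℝ} (hV : ∀ᶠ k in atTop, 0 < V k)
    (hd : Tendsto (fun k => dd V k / V k) atTop (nhds 0)) :
    Tendsto (fun k => dd V k / V (k - 1)) atTop (nhds 0) := by
  have hratio : Tendsto (fun k => dd V k / V k / (1 - dd V k / V k)) atTop (nhds 0) := by
    simpa only [sub_zero, zero_div, Pi.div_def] using
      hd.div (tendsto_const_nhds.sub hd) (by norm_num)
  refine hratio.congr' ?_
  filter_upwards [hV, eventually_ge_atTop 2] with k hk h2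
  rw [dd_of_two_le V h2, one_sub_div hk.ne', sub_sub_cancel, div_div_div_cancel_right₀ hk.ne']

section hatS

variable {s : ℕ → ℕ}

lemma mem_upperBounds_setOf_le (hs : Monotone s) {k N : ℕ} (h : k < s (N + 1)) :
    N ∈ upperBounds {n | s n ≤ k} :=
  fun _ hn => Nat.le_of_lt_succ (hs.reflect_lt (lt_of_le_of_lt hn h))

lemma hatS_le (hs : Monotone s) {k N : ℕ} (h : k < s (N + 1)) : hatS s k ≤ N :=
  csSup_le' (mem_upperBounds_setOf_le hs h)

lemma hatS_eq (hs : Monotone s) {k N : ℕ} (hN : s N ≤ k) (h : k < s (N + 1)) :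
    hatS s k = N :=
  le_antisymm (hatS_le hs h) (le_csSup ⟨N, mem_upperBounds_setOf_le hs h⟩ hN)

lemma bddAbove_setOf_le (hs : Tendsto s atTop atTop) (k : ℕ) : BddAbove {n | s n ≤ k} := by
  obtain ⟨M, hM⟩ := eventually_atTop.1 (hs.eventually_gt_atTop k)
  exact ⟨M, fun n hn => not_lt.1 fun hMn => (hM n hMn.le).not_ge hn⟩

lemma le_hatS (hs : Tendsto s atTop atTop) {n k : ℕ} (h : s n ≤ k) : n ≤ hatS s k :=
  le_csSup (bddAbove_setOf_le hs k) h

lemma monotone_hatS (hs : Tendsto s atTop atTop) : Monotone (hatS s) :=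
  fun _ l hkl => csSup_le_csSup' (bddAbove_setOf_le hs l) fun _ hn => le_trans hn hkl

lemma le_self_of_step (hs1 : s 1 = 1)
    (hstep : ∀ N : ℕ, 2 ≤ N → s N = s (N - 1) ∨ s N = s (N - 1) + 1)
    {k : ℕ} (hk : 1 ≤ k) :
    s k ≤ k := by
  induction k, hk using Nat.le_induction with
  | base => exact hs1.le
  | succ k hk ih =>
    have := hstep (k + 1) (by omega)
    simp only [Nat.add_sub_cancel] at this
    omega

lemma le_hatS_self (hs : Tendsto s atTop atTop) (hs1 : s 1 = 1)
    (hstep : ∀ N : ℕ, 2 ≤ N → s N = s (N - 1) ∨ s N = s (N - 1) + 1)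
    {k : ℕ} (hk : 1 ≤ k) :
    k ≤ hatS s k :=
  le_hatS hs (le_self_of_step hs1 hstep hk)

end hatS

section changeOfVariables

variable {s : ℕ → ℕ} (hmono : Monotone s) (hs1 : s 1 = 1)
  (hstep : ∀ N : ℕ, 2 ≤ N → s N = s (N - 1) ∨ s N = s (N - 1) + 1)
include hmono hs1 hstep

/-- Grouping `n` by `k = s n`, the weights `dd W n` of the block `s n = k` telescope to
`dd (W ∘ hatS s) k`; the last term accounts for the block of `s N` being summed only up to `N`. -/
lemma sum_dd_mul_comp_eq (W : ℕ → ℝ) (f : ℕ → ℂ) {N : ℕ} (hN : 1 ≤ N) :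
    ∑ n ∈ Icc 1 N, (dd W n : ℂ) * f (s n) =
      ∑ k ∈ Icc 1 (s N), (dd (fun k => W (hatS s k)) k : ℂ) * f k
        + ((W N - W (hatS s (s N)) : ℝ) : ℂ) * f (s N) := by
  induction N, hN using Nat.le_induction with
  | base =>
    simp only [hs1, Icc_self, sum_singleton, dd, if_neg (by omega : ¬ 2 ≤ 1)]
    push_cast
    ring
  | succ N hN ih =>
    rw [sum_Icc_succ_top (by omega), ih, dd_of_two_le W (by omega), Nat.add_sub_cancel]
    obtain hflat | hjump : s (N + 1) = s N ∨ s (N + 1) = s N + 1 := hstep (N + 1) (by omega)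
    · rw [hflat]
      push_cast
      ring
    · have hsN : 1 ≤ s N := hs1 ▸ hmono hN
      have hhat : hatS s (s N) = N := hatS_eq hmono le_rfl (by omega)
      rw [hjump, sum_Icc_succ_top (by omega), dd_of_two_le _ (by omega), Nat.add_sub_cancel,
        hhat]
      push_cast
      ring

lemma wAvg_comp_sub_wAvg_hatS (W : ℕ → ℝ) (f : ℕ → ℂ) {N : ℕ} (hN : 1 ≤ N) (ha : W N ≠ 0)
    (hb : W (hatS s (s N)) ≠ 0) :
    wAvg W (fun n => f (s n)) N - wAvg (fun k => W (hatS s k)) f (s N) =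
      ((W (hatS s (s N)) - W N) / W N : ℝ) *
        (wAvg (fun k => W (hatS s k)) f (s N) - f (s N)) := by
  rw [wAvg, sum_dd_mul_comp_eq hmono hs1 hstep W f hN, wAvg]
  have ha' : (W N : ℂ) ≠ 0 := by exact_mod_cast ha
  have hb' : (W (hatS s (s N)) : ℂ) ≠ 0 := by exact_mod_cast hb
  push_cast
  field_simp
  ring

end changeOfVariables

section weightComp

variable {W : ℕ → ℝ} {s : ℕ → ℕ} (hsinf : Tendsto s atTop atTop) (hs1 : s 1 = 1)
  (hstep : ∀ N : ℕ, 2 ≤ N → s N = s (N - 1) ∨ s N = s (N - 1) + 1)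
include hsinf hs1 hstep

lemma monotoneOn_comp_hatS {N₀ : ℕ} (hW : MonotoneOn W (Set.Ici N₀)) :
    MonotoneOn (fun k => W (hatS s k)) (Set.Ici (N₀ + 1)) := by
  intro k (hk : N₀ + 1 ≤ k) l _ hkl
  have hk' : N₀ ≤ hatS s k := le_trans (by omega) (le_hatS_self hsinf hs1 hstep (by omega))
  exact hW hk' (hk'.trans (monotone_hatS hsinf hkl)) (monotone_hatS hsinf hkl)

lemma tendsto_comp_hatS_atTop (hW : Tendsto W atTop atTop) :
    Tendsto (fun k => W (hatS s k)) atTop atTop :=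
  hW.comp <| tendsto_atTop_mono' atTop
    ((eventually_ge_atTop 1).mono fun _ hk => le_hatS_self hsinf hs1 hstep hk) tendsto_id

lemma eventually_norm_wAvg_comp_sub_wAvg_hatS_le (hW : memW W) (hmono : Monotone s) :
    ∃ C : ℝ, ∀ᶠ N in atTop, ∀ f : ℕ → ℂ, (∀ n, ‖f n‖ ≤ 1) →
      ‖wAvg W (fun n => f (s n)) N - wAvg (fun k => W (hatS s k)) f (s N)‖ ≤
        dd (fun k => W (hatS s k)) (s N) / W (hatS s (s N - 1)) *
          (2 + C / W (hatS s (s N))) := by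
  obtain ⟨-, ⟨N₀, hN₀⟩, hWtop⟩ := hW
  have hWmono : MonotoneOn W (Set.Ici N₀) := fun m hm n _ hmn => hN₀ m n hm hmn
  set V : ℕ → ℝ := fun k => W (hatS s k)
  have hVmono := monotoneOn_comp_hatS hsinf hs1 hstep hWmono
  have hVpos : ∀ᶠ k in atTop, 0 < V k :=
    (tendsto_comp_hatS_atTop hsinf hs1 hstep hWtop).eventually_gt_atTop 0
  refine ⟨∑ k ∈ Icc 1 (N₀ + 1), (|dd V k| - dd V k), ?_⟩
  filter_upwards [eventually_ge_atTop 1, hsinf.eventually_ge_atTop (N₀ + 2),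
    ((tendsto_sub_atTop_nat 1).comp hsinf).eventually hVpos] with N hN1 hsN hc f hf
  have hN : N₀ + 2 ≤ N := hsN.trans (le_self_of_step hs1 hstep hN1)
  have hcb : V (s N - 1) ≤ V (s N) :=
    hVmono (Set.mem_Ici.2 (by omega)) (Set.mem_Ici.2 (by omega)) (by omega)
  have hca : V (s N - 1) ≤ W N := by
    have hc0 : N₀ ≤ hatS s (s N - 1) :=
      (le_hatS_self hsinf hs1 hstep (by omega)).trans' (by omega)
    exact hWmono hc0 (Set.mem_Ici.2 (by omega))
      (hatS_le hmono ((Nat.sub_lt (by omega) one_pos).trans_le (hmono N.le_succ)))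
  have hab : W N ≤ V (s N) := by
    have hNhat : N ≤ hatS s (s N) := le_hatS hsinf le_rfl
    exact hWmono (Set.mem_Ici.2 (by omega)) (Set.mem_Ici.2 (by omega)) hNhat
  have ha : 0 < W N := lt_of_lt_of_le hc hca
  have hb : 0 < V (s N) := ha.trans_le hab
  rw [wAvg_comp_sub_wAvg_hatS hmono hs1 hstep W f (by omega) ha.ne' hb.ne', norm_mul,
    Complex.norm_real, Real.norm_of_nonneg (div_nonneg (sub_nonneg.2 hab) ha.le),
    dd_of_two_le V (by omega)]
  have hratio : (V (s N) - W N) / W N ≤ (V (s N) - V (s N - 1)) / V (s N - 1) :=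
    div_le_div₀ (by linarith) (by linarith) hc hca
  have havg := norm_wAvg_le (K := N₀ + 1) (by omega) (by omega) hVmono hb hf
  refine mul_le_mul hratio ((norm_sub_le _ _).trans ?_) (norm_nonneg _)
    (div_nonneg (by linarith) hc.le)
  linarith [hf (s N)]

end weightComp

/-- Lemma 4.9, change of variables with `ŝ`:
`E^W_{n≤N} f(s(n)) = E^{W∘ŝ}_{k≤s(N)} f(k) + o(1)` uniformly over `f` with `‖f‖_∞ ≤ 1`. -/
theorem stmt16 (W : ℕ → ℝ) (hW : memW W)
    (s : ℕ → ℕ) (hmono : Monotone s) (hs1 : s 1 = 1)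
    (hsinf : Tendsto s atTop atTop)
    (hstep : ∀ N : ℕ, 2 ≤ N → s N = s (N - 1) ∨ s N = s (N - 1) + 1)
    (hd : Tendsto (fun N : ℕ => dd (fun k => W (hatS s k)) N / W (hatS s N))
      atTop (nhds 0)) :
    ∀ ε : ℝ, 0 < ε → ∀ᶠ N : ℕ in atTop, ∀ f : ℕ → ℂ, (∀ n, ‖f n‖ ≤ 1) →
      ‖wAvg W (fun n => f (s n)) N - wAvg (fun k => W (hatS s k)) f (s N)‖ < ε := by
  obtain ⟨C, hbound⟩ := eventually_norm_wAvg_comp_sub_wAvg_hatS_le hsinf hs1 hstep hW hmono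
  have hVtop := tendsto_comp_hatS_atTop hsinf hs1 hstep hW.2.2
  have hlim : Tendsto (fun N => dd (fun k => W (hatS s k)) (s N) / W (hatS s (s N - 1)) *
      (2 + C / W (hatS s (s N)))) atTop (nhds 0) := by
    have hjump := (tendsto_dd_div_pred (hVtop.eventually_gt_atTop 0) hd).comp hsinf
    have hdefect := (tendsto_const_nhds (x := (2 : ℝ))).add
      (tendsto_const_nhds (x := C).div_atTop (hVtop.comp hsinf))
    simpa using hjump.mul hdefect
  intro ε hε
  filter_upwards [hbound, hlim.eventually (gt_mem_nhds hε)] with N hN hNε f hf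
  exact (hN f hf).trans_lt hNε
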